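/- For all n ≥ 3 and p ≥ 0, B(C_n ∪ (p+2)K_1) = B(H_{n,2} ∪ pK_1) + 2·B(H_{n,1} ∪ pK_1) + B(H_{n,0} ∪ pK_1) and T(C_n ∪ (p+2)K_1) = T(H_{n,2} ∪ pK_1) + 2·T(H_{n,1} ∪ pK_1) + T(H_{n,0} ∪ pK_1). -/

import Mathlib

open Finset SimpleGraph

/-- A coloring partition of `G`: a partition of the vertex set into (nonempty)
independent (stable) sets. -/
def IsStablePartition {V : Type*} [Fintype V] [DecidableEq V] (G : SimpleGraph V)
    (P : Finpartition (univ : Finset V)) : Prop :=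
  ∀ t ∈ P.parts, ∀ u ∈ t, ∀ v ∈ t, ¬ G.Adj u v

open scoped Classical in
/-- `colB G` : the number of coloring partitions of `G`. -/
noncomputable def colB {V : Type*} [Fintype V] [DecidableEq V] (G : SimpleGraph V) : ℕ :=
  (univ.filter (IsStablePartition G)).card

open scoped Classical in
/-- `colT G` : the total number of blocks summed over all coloring partitions of `G`. -/
noncomputable def colT {V : Type*} [Fintype V] [DecidableEq V] (G : SimpleGraph V) : ℕ :=
  ∑ P ∈ univ.filter (IsStablePartition G), P.parts.card

/-- `colA G = colT G / colB G` : the average number of blocks. -/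
noncomputable def colA {V : Type*} [Fintype V] [DecidableEq V] (G : SimpleGraph V) : ℚ :=
  (colT G : ℚ) / (colB G : ℚ)

/-- The `n`-th Bell number: the number of partitions of an `n`-element set. -/
noncomputable def bell (n : ℕ) : ℕ :=
  Fintype.card (Finpartition (univ : Finset (Fin n)))

/-- The disjoint union of `G` with `p` isolated vertices (`G ∪ pK₁`). -/
def unionIsolated {V : Type*} (G : SimpleGraph V) (p : ℕ) : SimpleGraph (V ⊕ Fin p) :=
  SimpleGraph.fromRel (fun x y => ∃ a b, x = Sum.inl a ∧ y = Sum.inl b ∧ G.Adj a b)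

/-- `Hgraph n r` : the graph obtained from the disjoint union of the cycle `C_n` and the
path `P_r` by adding an edge between one endpoint of the path (vertex `0`) and one vertex
of the cycle (vertex `0`). -/
def Hgraph (n r : ℕ) : SimpleGraph (Fin n ⊕ Fin r) :=
  SimpleGraph.fromRel (fun x y =>
    (∃ a b, x = Sum.inl a ∧ y = Sum.inl b ∧ (cycleGraph n).Adj a b) ∨
    (∃ a b, x = Sum.inr a ∧ y = Sum.inr b ∧ (pathGraph r).Adj a b) ∨
    (∃ (a : Fin n) (b : Fin r), a.val = 0 ∧ b.val = 0 ∧ x = Sum.inl a ∧ y = Sum.inr b))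

/-!
Write `S(G)` for the sum of `φ (number of blocks)` over the stable partitions of `G`, so that
`φ = 1` gives `B` and `φ = id` gives `T`. Let `z` be a new isolated vertex and `w` a vertex of
`G`. The stable partitions of `G ∪ K₁` that put `z` into the block of `w` are those of `G`, and
the others are those of `G` plus the edge `wz`; hence `S(G ∪ K₁) = S(G·P₁) + S(G)`, where `G·P₁`
is `G` with a pendant vertex at `w`. Using this for both isolated vertices, and
`(G ∪ K₁)·P₁ ≅ G·P₁ ∪ K₁`, gives `S(G ∪ 2K₁) = S(G·P₂) + 2 S(G·P₁) + S(G)`. For `G = C_n ∪ pK₁`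
and `w` on the cycle, `G·P_r ≅ H_{n,r} ∪ pK₁`.
-/

open scoped Classical

namespace Finpartition

variable {α β : Type*} [Fintype α] [DecidableEq α] [Fintype β] [DecidableEq β]

theorem part_eq_part_iff_mem (P : Finpartition (univ : Finset α)) {x y : α} :
    P.part x = P.part y ↔ y ∈ P.part x := by
  rw [P.mem_part_iff_part_eq_part (mem_univ y) (mem_univ x), eq_comm]

theorem mem_parts_iff_exists_part_eq (P : Finpartition (univ : Finset α)) {t : Finset α} :
    t ∈ P.parts ↔ ∃ a, P.part a = t := by
  refine ⟨fun ht => ?_, ?_⟩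
  · obtain ⟨a, -, rfl⟩ := P.part_surjOn ht
    exact ⟨a, rfl⟩
  · rintro ⟨a, rfl⟩
    exact P.part_mem.2 (mem_univ a)

theorem ext_part {P Q : Finpartition (univ : Finset α)} (h : ∀ a, P.part a = Q.part a) :
    P = Q := by
  ext t
  simp only [mem_parts_iff_exists_part_eq, h]

noncomputable def comap (g : α → β) (Q : Finpartition (univ : Finset β)) :
    Finpartition (univ : Finset α) :=
  ofSetoid (Setoid.ker (Q.part ∘ g))

variable {f : β → α} {g : α → β}

theorem mem_part_comap {Q : Finpartition (univ : Finset β)} {x y : α} :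
    y ∈ (Q.comap g).part x ↔ Q.part (g x) = Q.part (g y) :=
  mem_part_ofSetoid_iff_rel

theorem part_comap_eq_part_comap_iff {Q : Finpartition (univ : Finset β)} {x y : α} :
    (Q.comap g).part x = (Q.comap g).part y ↔ Q.part (g x) = Q.part (g y) := by
  rw [part_eq_part_iff_mem, mem_part_comap]

theorem comap_comap_of_leftInverse (hgf : Function.LeftInverse g f)
    (Q : Finpartition (univ : Finset β)) : (Q.comap g).comap f = Q :=
  ext_part fun a => by
    ext b
    rw [mem_part_comap, part_comap_eq_part_comap_iff, hgf, hgf, part_eq_part_iff_mem]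

theorem comap_comap_eq_self {P : Finpartition (univ : Finset α)}
    (hP : ∀ x, P.part (f (g x)) = P.part x) : (P.comap f).comap g = P :=
  ext_part fun a => by
    ext b
    rw [mem_part_comap, part_comap_eq_part_comap_iff, hP, hP, part_eq_part_iff_mem]

theorem part_comap (Q : Finpartition (univ : Finset β)) (x : α) :
    (Q.comap g).part x = univ.filter (fun y => g y ∈ Q.part (g x)) := by
  ext y
  rw [mem_part_comap, mem_filter, part_eq_part_iff_mem]
  simp

theorem card_parts_comap (hg : Function.Surjective g) (Q : Finpartition (univ : Finset β)) :
    #(Q.comap g).parts = #Q.parts := by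
  have hparts : (Q.comap g).parts = Q.parts.image (fun u => univ.filter (fun y => g y ∈ u)) := by
    ext t
    simp only [mem_parts_iff_exists_part_eq, mem_image, part_comap]
    constructor
    · rintro ⟨x, rfl⟩
      exact ⟨_, ⟨g x, rfl⟩, rfl⟩
    · rintro ⟨_, ⟨b, rfl⟩, rfl⟩
      obtain ⟨x, rfl⟩ := hg b
      exact ⟨x, rfl⟩
  rw [hparts, card_image_of_injective]
  intro u v huv
  ext b
  obtain ⟨x, rfl⟩ := hg b
  simpa using congrArg (x ∈ ·) huv

end Finpartition

section StablePartitions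

variable {α β : Type*} [Fintype α] [DecidableEq α] [Fintype β] [DecidableEq β]

theorem isStablePartition_iff_forall_part_eq {G : SimpleGraph α}
    {P : Finpartition (univ : Finset α)} :
    IsStablePartition G P ↔ ∀ x y, P.part x = P.part y → ¬ G.Adj x y := by
  refine ⟨fun h x y hxy => h _ (P.part_mem.2 (mem_univ x)) x (P.mem_part (mem_univ x)) y
    (P.part_eq_part_iff_mem.1 hxy), fun h t ht u hu v hv => h u v ?_⟩
  rw [P.part_eq_of_mem ht hu, P.part_eq_of_mem ht hv]

theorem isStablePartition_sup_edge_iff {G : SimpleGraph α} {P : Finpartition (univ : Finset α)}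
    {u v : α} (huv : u ≠ v) :
    IsStablePartition (G ⊔ edge u v) P ↔ IsStablePartition G P ∧ P.part u ≠ P.part v := by
  simp only [isStablePartition_iff_forall_part_eq, sup_adj, edge_adj]
  constructor
  · intro h
    exact ⟨fun x y hxy hG => h x y hxy (.inl hG),
      fun huv' => h u v huv' (.inr ⟨.inl ⟨rfl, rfl⟩, huv⟩)⟩
  · rintro ⟨hG, hne⟩ x y hxy (hadj | ⟨⟨rfl, rfl⟩ | ⟨rfl, rfl⟩, -⟩)
    · exact hG x y hxy hadj
    · exact hne hxy
    · exact hne hxy.symm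

noncomputable def stablePartitionSum (G : SimpleGraph α) (φ : ℕ → ℕ) : ℕ :=
  ∑ P ∈ univ.filter (IsStablePartition G), φ #P.parts

theorem colB_eq_stablePartitionSum (G : SimpleGraph α) : colB G = stablePartitionSum G 1 :=
  card_eq_sum_ones _

theorem colT_eq_stablePartitionSum (G : SimpleGraph α) : colT G = stablePartitionSum G id :=
  rfl

theorem sum_stablePartitions_of_retract {G : SimpleGraph α} {H : SimpleGraph β} (g : G →g H)
    (f : H →g G) (hgf : Function.LeftInverse g f) (φ : ℕ → ℕ) :
    ∑ P ∈ univ.filter (fun P : Finpartition (univ : Finset α) =>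
        IsStablePartition G P ∧ ∀ x, P.part (f (g x)) = P.part x), φ #P.parts =
      stablePartitionSum H φ := by
  refine sum_bij' (fun P _ => P.comap f) (fun Q _ => Q.comap g) ?_ ?_ ?_ ?_ ?_
  · simp only [mem_filter, mem_univ, true_and, isStablePartition_iff_forall_part_eq]
    rintro P ⟨hP, -⟩ a b hab hadj
    exact hP _ _ (Finpartition.part_comap_eq_part_comap_iff.1 hab) (f.map_adj hadj)
  · simp only [mem_filter, mem_univ, true_and, isStablePartition_iff_forall_part_eq]
    refine fun Q hQ => ⟨fun x y hxy hadj => ?_, fun x => ?_⟩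
    · exact hQ _ _ (Finpartition.part_comap_eq_part_comap_iff.1 hxy) (g.map_adj hadj)
    · rw [Finpartition.part_comap_eq_part_comap_iff, hgf]
  · intro P hP
    exact Finpartition.comap_comap_eq_self (mem_filter.1 hP).2.2
  · intro Q _
    exact Finpartition.comap_comap_of_leftInverse hgf Q
  · intro P hP
    conv_lhs => rw [← Finpartition.comap_comap_eq_self (mem_filter.1 hP).2.2]
    rw [Finpartition.card_parts_comap hgf.surjective]

theorem stablePartitionSum_congr {G : SimpleGraph α} {H : SimpleGraph β} (e : G ≃g H)
    (φ : ℕ → ℕ) : stablePartitionSum G φ = stablePartitionSum H φ := by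
  rw [← sum_stablePartitions_of_retract e.toHom e.symm.toHom e.right_inv φ, stablePartitionSum]
  congr 1
  refine filter_congr fun P _ => ?_
  simp

end StablePartitions

section Pendant

variable {α β : Type*}

def addPendant (G : SimpleGraph α) (w : α) : SimpleGraph (α ⊕ Fin 1) :=
  (G ⊕g ⊥) ⊔ edge (.inl w) (.inr 0)

def addPendantCongr {G : SimpleGraph α} {H : SimpleGraph β} (e : G ≃g H) (w : α) :
    addPendant G w ≃g addPendant H (e w) :=
  ⟨e.toEquiv.sumCongr (Equiv.refl _), by
    rintro (a | i) (b | j) <;> simp [addPendant, edge_adj, e.map_adj_iff]⟩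

def addPendantSumIso (G : SimpleGraph α) (I : SimpleGraph β) (w : α) :
    addPendant (G ⊕g I) (.inl w) ≃g addPendant G w ⊕g I :=
  ⟨(Equiv.sumAssoc _ _ _).trans (((Equiv.refl _).sumCongr (Equiv.sumComm _ _)).trans
      (Equiv.sumAssoc _ _ _).symm), by
    rintro ((a | b) | i) ((c | d) | j) <;> simp [addPendant, edge_adj]⟩

variable [Fintype α] [DecidableEq α]

theorem stablePartitionSum_sum_bot (G : SimpleGraph α) (w : α) (φ : ℕ → ℕ) :
    stablePartitionSum (G ⊕g (⊥ : SimpleGraph (Fin 1))) φ =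
      stablePartitionSum (addPendant G w) φ + stablePartitionSum G φ := by
  let collapse : G ⊕g (⊥ : SimpleGraph (Fin 1)) →g G :=
    ⟨Sum.elim id fun _ => w, by rintro (a | i) (b | j) h <;> simp_all⟩
  rw [stablePartitionSum, ← sum_filter_not_add_sum_filter _
    (fun P : Finpartition (univ : Finset (α ⊕ Fin 1)) => P.part (.inl w) = P.part (.inr 0)),
    filter_filter, filter_filter]
  congr 1
  · refine sum_congr (filter_congr fun P _ => ?_) fun _ _ => rfl
    rw [addPendant, isStablePartition_sup_edge_iff Sum.inl_ne_inr]
  · rw [← sum_stablePartitions_of_retract collapse Embedding.sumInl.toHom (fun _ => rfl) φ]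
    refine sum_congr (filter_congr fun P _ => and_congr_right fun _ => ?_) fun _ _ => rfl
    refine ⟨fun h => ?_, fun h => h (.inr 0)⟩
    rintro (a | i)
    · rfl
    · rw [Subsingleton.elim i 0]
      exact h

theorem stablePartitionSum_sum_bot_sum_bot (G : SimpleGraph α) (w : α) (φ : ℕ → ℕ) :
    stablePartitionSum ((G ⊕g (⊥ : SimpleGraph (Fin 1))) ⊕g (⊥ : SimpleGraph (Fin 1))) φ =
      stablePartitionSum (addPendant (addPendant G w) (.inr 0)) φ +
        2 * stablePartitionSum (addPendant G w) φ + stablePartitionSum G φ := by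
  rw [stablePartitionSum_sum_bot _ (.inl w), stablePartitionSum_congr (addPendantSumIso G _ w),
    stablePartitionSum_sum_bot _ (.inr 0), stablePartitionSum_sum_bot _ w]
  ring

theorem stablePartitionSum_sum_sum_bot_sum_bot [Fintype β] [DecidableEq β] (G : SimpleGraph α)
    (I : SimpleGraph β) (w : α) (φ : ℕ → ℕ) :
    stablePartitionSum (((G ⊕g I) ⊕g (⊥ : SimpleGraph (Fin 1))) ⊕g (⊥ : SimpleGraph (Fin 1)))
        φ =
      stablePartitionSum (addPendant (addPendant G w) (.inr 0) ⊕g I) φ +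
        2 * stablePartitionSum (addPendant G w ⊕g I) φ + stablePartitionSum (G ⊕g I) φ := by
  have hpath : stablePartitionSum (addPendant (addPendant (G ⊕g I) (.inl w)) (.inr 0)) φ =
      stablePartitionSum (addPendant (addPendant G w) (.inr 0) ⊕g I) φ :=
    (stablePartitionSum_congr (addPendantCongr (addPendantSumIso G I w) (.inr 0)) φ).trans
      (stablePartitionSum_congr (addPendantSumIso _ _ _) φ)
  rw [stablePartitionSum_sum_bot_sum_bot _ (.inl w), hpath,
    stablePartitionSum_congr (addPendantSumIso G I w)]

end Pendant

section Hgraph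

variable {α : Type*} {G : SimpleGraph α} {n r p : ℕ}

@[simp]
theorem bot_sum_bot {β : Type*} : (⊥ : SimpleGraph α) ⊕g (⊥ : SimpleGraph β) = ⊥ := by
  ext (a | a) (b | b) <;> simp

theorem unionIsolated_eq_sum : unionIsolated G p = G ⊕g ⊥ := by
  ext (a | i) (b | j)
  · simpa [unionIsolated, G.adj_comm b a] using G.ne_of_adj
  all_goals simp [unionIsolated]

@[simp]
theorem Hgraph_adj_inl_inl {a b : Fin n} :
    (Hgraph n r).Adj (.inl a) (.inl b) ↔ (cycleGraph n).Adj a b := by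
  simpa [Hgraph, (cycleGraph n).adj_comm b a] using (cycleGraph n).ne_of_adj

@[simp]
theorem Hgraph_adj_inr_inr {i j : Fin r} :
    (Hgraph n r).Adj (.inr i) (.inr j) ↔ (pathGraph r).Adj i j := by
  simpa [Hgraph, (pathGraph r).adj_comm j i] using (pathGraph r).ne_of_adj

@[simp]
theorem Hgraph_adj_inl_inr {a : Fin n} {i : Fin r} :
    (Hgraph n r).Adj (.inl a) (.inr i) ↔ a.val = 0 ∧ i.val = 0 := by
  simp [Hgraph]

@[simp]
theorem Hgraph_adj_inr_inl {a : Fin n} {i : Fin r} :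
    (Hgraph n r).Adj (.inr i) (.inl a) ↔ a.val = 0 ∧ i.val = 0 := by
  simp [Hgraph]

def sumBotAddTwoIso (G : SimpleGraph α) (p : ℕ) :
    G ⊕g (⊥ : SimpleGraph (Fin (p + 2))) ≃g
      ((G ⊕g (⊥ : SimpleGraph (Fin p))) ⊕g (⊥ : SimpleGraph (Fin 1))) ⊕g
        (⊥ : SimpleGraph (Fin 1)) :=
  (Iso.sumCongr .refl ⟨(finSumFinEquiv (m := p + 1) (n := 1)).symm.trans
      ((finSumFinEquiv (m := p) (n := 1)).symm.sumCongr (.refl _)), by simp⟩).trans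
    (Iso.sumAssoc.symm.trans (Iso.sumCongr Iso.sumAssoc.symm .refl))

def hgraphZeroIso (n : ℕ) : Hgraph n 0 ≃g cycleGraph n :=
  ⟨Equiv.sumEmpty _ _, by rintro (a | ⟨_, ⟨⟩⟩) (b | ⟨_, ⟨⟩⟩); simp⟩

theorem Hgraph_one_eq_addPendant (m : ℕ) :
    Hgraph (m + 1) 1 = addPendant (cycleGraph (m + 1)) 0 := by
  ext (a | i) (b | j) <;> simp [addPendant, edge_adj, Fin.fin_one_eq_zero]

def hgraphTwoIso (m : ℕ) :
    Hgraph (m + 1) 2 ≃g addPendant (addPendant (cycleGraph (m + 1)) 0) (.inr 0) :=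
  ⟨((Equiv.refl _).sumCongr (finSumFinEquiv (m := 1) (n := 1)).symm).trans
      (Equiv.sumAssoc _ _ _).symm, by
    have h0 : (finSumFinEquiv (m := 1) (n := 1)).symm 0 = .inl 0 := rfl
    have h1 : (finSumFinEquiv (m := 1) (n := 1)).symm 1 = .inr 0 := rfl
    rintro (a | i) (b | j) <;> (try fin_cases i) <;> (try fin_cases j) <;>
      simp [addPendant, edge_adj, pathGraph_adj, h0, h1]⟩

end Hgraph

/-- For all `n ≥ 3` and `p ≥ 0`,
`B(C_n ∪ (p+2)K₁) = B(H_{n,2} ∪ pK₁) + 2 B(H_{n,1} ∪ pK₁) + B(H_{n,0} ∪ pK₁)` and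
`T(C_n ∪ (p+2)K₁) = T(H_{n,2} ∪ pK₁) + 2 T(H_{n,1} ∪ pK₁) + T(H_{n,0} ∪ pK₁)`. -/
theorem stmt_18 (n p : ℕ) (hn : 3 ≤ n) :
    colB (unionIsolated (cycleGraph n) (p + 2)) =
      colB (unionIsolated (Hgraph n 2) p) + 2 * colB (unionIsolated (Hgraph n 1) p) +
        colB (unionIsolated (Hgraph n 0) p) ∧
    colT (unionIsolated (cycleGraph n) (p + 2)) =
      colT (unionIsolated (Hgraph n 2) p) + 2 * colT (unionIsolated (Hgraph n 1) p) +
        colT (unionIsolated (Hgraph n 0) p) := by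
  obtain ⟨m, rfl⟩ : ∃ m, n = m + 1 := ⟨n - 1, by omega⟩
  have key (φ : ℕ → ℕ) :
      stablePartitionSum (unionIsolated (cycleGraph (m + 1)) (p + 2)) φ =
        stablePartitionSum (unionIsolated (Hgraph (m + 1) 2) p) φ +
          2 * stablePartitionSum (unionIsolated (Hgraph (m + 1) 1) p) φ +
            stablePartitionSum (unionIsolated (Hgraph (m + 1) 0) p) φ := by
    simp only [unionIsolated_eq_sum, Hgraph_one_eq_addPendant]
    rw [stablePartitionSum_congr (sumBotAddTwoIso _ p),
      stablePartitionSum_sum_sum_bot_sum_bot _ _ 0,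
      stablePartitionSum_congr ((hgraphTwoIso m).sumCongr .refl),
      stablePartitionSum_congr ((hgraphZeroIso _).sumCongr .refl)]
  simp only [colB_eq_stablePartitionSum, colT_eq_stablePartitionSum, key, and_self]
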